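/- Inscribed polygon setup: let n ≥ 3, o : E, ρ > 0, and let α : Fin n → ℝ be strictly increasing with α (n−1) − α 0 < 2π; define vertices v : ZMod n → E by v k = o + ρ • (Real.cos (α k̄), Real.sin (α k̄)), where k̄ is the canonical representative of k. For i : ZMod n define CW i : List ℝ := List.ofFn (fun k : Fin (n−1) => dist (v i) (v (i + k + 1))) and ACW i : List ℝ := List.ofFn (fun k : Fin (n−1) => dist (v i) (v (i − (k + 1)))). Assume: (1) CW i ≠ ACW i for every i; (2) CW i ≠ CW j for all i ≠ j; (3) CW i ≠ ACW j for all i ≠ j. Then the polygon is asymmetric: (a) there is no 1-dimensional affine subspace L of E such that (EuclideanGeometry.reflection L) '' Set.range v = Set.range v, and (b) (Equiv.pointReflection o) '' Set.range v ≠ Set.range v. -/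

import Mathlib

noncomputable abbrev E : Type := EuclideanSpace ℝ (Fin 2)

/-!
A symmetry `f` of the vertex set is an isometry that fixes the center `o`, the only center of a
circle through three of the vertices. Its linear part is a rotation or a reflection, so modulo `2π`
it sends the vertex angles `β i` to `φ + β i` or to `φ - β i`, and hence preserves or reverses
the counterclockwise arcs between vertices. Since the successor `i + 1` of a vertex is the one
reached by the shortest counterclockwise arc, the induced index map is `i ↦ c + i` or `i ↦ c - i`.
In the first case `CW c = CW 0`, in the second `ACW c = CW 0`; the tuple conditions leave only
the first case with `c = 0`, so `f` fixes every vertex. Neither a line reflection (three points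
of a circle are never collinear) nor the point reflection in `o` can do that.
-/

open Real Function Set

noncomputable section

lemma ZMod.eq_add_mul_of_map_add_one {n : ℕ} [NeZero n] {p : ZMod n → ZMod n} {s : ZMod n}
    (h : ∀ i, p (i + 1) = p i + s) (i : ZMod n) : p i = p 0 + s * i := by
  obtain ⟨k, rfl⟩ := ZMod.natCast_zmod_surjective i
  induction k with
  | zero => simp
  | succ k ih => rw [Nat.cast_succ, h, ih]; ring

lemma exists_bijective_comp_eq {ι P : Type*} [Finite ι] {v : ι → P} (hv : Injective v)
    {f : P → P} (hf : Injective f) (h : f '' range v ⊆ range v) :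
    ∃ p : ι → ι, Bijective p ∧ ∀ i, v (p i) = f (v i) := by
  have : ∀ i, ∃ j, v j = f (v i) := fun i => h (mem_image_of_mem f (mem_range_self i))
  choose p hp using this
  refine ⟨p, Finite.injective_iff_bijective.mp fun a b hab => hv (hf ?_), hp⟩
  rw [← hp, ← hp, hab]

section Plane

variable {V P : Type*} [NormedAddCommGroup V] [InnerProductSpace ℝ V] [MetricSpace P]
  [NormedAddTorsor V P]

lemma Isometry.map_center_eq_of_subset_image [FiniteDimensional ℝ V]
    (hd : Module.finrank ℝ V = 2) {f : P → P} (hf : Isometry f) {S : Set P} {c : P} {r : ℝ}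
    (hS : S ⊆ Metric.sphere c r) (hfS : S ⊆ f '' S) {p₁ p₂ p₃ : P} (h₁ : p₁ ∈ S) (h₂ : p₂ ∈ S)
    (h₃ : p₃ ∈ S) (h₁₂ : p₁ ≠ p₂) (h₁₃ : p₁ ≠ p₃) (h₂₃ : p₂ ≠ p₃) : f c = c := by
  by_contra hne
  have hS' : S ⊆ Metric.sphere (f c) r := by
    rintro _ hx
    obtain ⟨y, hy, rfl⟩ := hfS hx
    rw [Metric.mem_sphere, hf.dist_eq]
    exact hS hy
  rcases EuclideanGeometry.eq_of_mem_sphere_of_mem_sphere_of_finrank_eq_two hd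
      (s₁ := ⟨c, r⟩) (s₂ := ⟨f c, r⟩)
      (fun h => hne (congrArg EuclideanGeometry.Sphere.center h).symm)
      h₁₂ (hS h₁) (hS h₂) (hS h₃) (hS' h₁) (hS' h₂) (hS' h₃) with h | h
  · exact h₁₃ h.symm
  · exact h₂₃ h.symm

lemma EuclideanGeometry.Cospherical.not_subset_of_finrank_direction_eq_one {S : Set P}
    (hS : Cospherical S) {p₁ p₂ p₃ : P} (h₁ : p₁ ∈ S) (h₂ : p₂ ∈ S) (h₃ : p₃ ∈ S)
    (h₁₂ : p₁ ≠ p₂) (h₁₃ : p₁ ≠ p₃) (h₂₃ : p₂ ≠ p₃) {L : AffineSubspace ℝ P}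
    (hL : Module.finrank ℝ L.direction = 1) : ¬ S ⊆ L := by
  intro hSL
  have hcol : Collinear ℝ (L : Set P) := by
    rw [Collinear, ← L.direction_eq_vectorSpan]
    exact (Module.rank_eq_one_iff_finrank_eq_one.mpr hL).le
  exact affineIndependent_iff_not_collinear_set.mp
    (hS.affineIndependent_of_mem_of_ne h₁ h₂ h₃ h₁₂ h₁₃ h₂₃)
    (hcol.subset (by simp [Set.insert_subset_iff, hSL h₁, hSL h₂, hSL h₃]))

end Plane

namespace InscribedPolygon

section Arc

variable {n : ℕ} [NeZero n] (α : Fin n → ℝ)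

def vertexAngle (i : ZMod n) : ℝ := α ⟨i.val, i.val_lt⟩

def windingAngle (k : ℕ) : ℝ := α ⟨k % n, Nat.mod_lt _ (NeZero.pos n)⟩ + 2 * π * (k / n : ℕ)

def arc (i j : ZMod n) : ℝ := toIcoMod two_pi_pos 0 (vertexAngle α j - vertexAngle α i)

variable {α}

lemma windingAngle_add_self (k : ℕ) : windingAngle α (k + n) = windingAngle α k + 2 * π := by
  simp only [windingAngle, Nat.add_mod_right, Nat.add_div_right k (NeZero.pos n)]
  push_cast
  ring

lemma windingAngle_val (i : ZMod n) : windingAngle α i.val = vertexAngle α i := by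
  simp [windingAngle, vertexAngle, Nat.mod_eq_of_lt i.val_lt, Nat.div_eq_of_lt i.val_lt]

lemma arc_self (i : ZMod n) : arc α i i = 0 := by
  rw [arc, sub_self, toIcoMod_apply_left]

lemma arc_eq_arc_of_coe_eq {i j k l : ZMod n}
    (h : ((vertexAngle α j - vertexAngle α i : ℝ) : Angle) =
      (vertexAngle α l - vertexAngle α k : ℝ)) :
    arc α i j = arc α k l := by
  obtain ⟨z, hz⟩ := Angle.angle_eq_iff_two_pi_dvd_sub.mp h
  rw [arc, arc, toIcoMod_eq_toIcoMod]
  exact ⟨-z, by rw [zsmul_eq_mul, Int.cast_neg]; linarith⟩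

variable (hα : StrictMono α) (hspan : ∀ a b, α b - α a < 2 * π)
include hα hspan

lemma windingAngle_strictMono : StrictMono (windingAngle α) := by
  intro a b hab
  have ha := Nat.mod_lt a (NeZero.pos n)
  have hb := Nat.mod_lt b (NeZero.pos n)
  rcases (Nat.div_le_div_right (c := n) hab.le).lt_or_eq with hq | hq
  · have hq' : ((a / n : ℕ) : ℝ) + 1 ≤ (b / n : ℕ) := by exact_mod_cast hq
    have := hspan ⟨b % n, hb⟩ ⟨a % n, ha⟩
    unfold windingAngle
    nlinarith [pi_pos]
  · have hr : a % n < b % n := by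
      have := Nat.div_add_mod a n
      have := Nat.div_add_mod b n
      rw [hq] at *
      omega
    unfold windingAngle
    rw [hq]
    linarith [hα (a := ⟨a % n, ha⟩) (b := ⟨b % n, hb⟩) hr]

lemma arc_eq_windingAngle_sub (i j : ZMod n) :
    arc α i j = windingAngle α (i.val + (j - i).val) - windingAngle α i.val := by
  have hW := windingAngle_strictMono hα hspan
  rw [arc, toIcoMod_eq_iff]
  refine ⟨⟨sub_nonneg.mpr (hW.monotone (Nat.le_add_right _ _)), ?_⟩, ?_⟩
  · rw [zero_add, sub_lt_iff_lt_add', ← windingAngle_add_self]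
    exact hW (by simpa using (j - i).val_lt)
  · have hj : vertexAngle α j = α ⟨(i.val + (j - i).val) % n, Nat.mod_lt _ (NeZero.pos n)⟩ := by
      unfold vertexAngle
      congr 2
      rw [← ZMod.val_add, add_sub_cancel]
    refine ⟨-(((i.val + (j - i).val) / n : ℕ) : ℤ), ?_⟩
    rw [hj, ← windingAngle_val i, zsmul_eq_mul]
    simp only [windingAngle, Int.cast_neg, Int.cast_natCast]
    ring

lemma arc_lt_arc_iff {i j m : ZMod n} : arc α i j < arc α i m ↔ (j - i).val < (m - i).val := by
  rw [arc_eq_windingAngle_sub hα hspan, arc_eq_windingAngle_sub hα hspan, sub_lt_sub_iff_right,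
    (windingAngle_strictMono hα hspan).lt_iff_lt, Nat.add_lt_add_iff_left]

lemma arc_le_arc_iff {i j m : ZMod n} : arc α i j ≤ arc α i m ↔ (j - i).val ≤ (m - i).val := by
  rw [← not_lt, ← not_lt, arc_lt_arc_iff hα hspan]

lemma arc_pos {i j : ZMod n} (hij : i ≠ j) : 0 < arc α i j := by
  rw [← arc_self i, arc_lt_arc_iff hα hspan, sub_self, ZMod.val_zero, ZMod.val_pos]
  exact sub_ne_zero.mpr hij.symm

lemma arc_add_arc {i j : ZMod n} (hij : i ≠ j) : arc α i j + arc α j i = 2 * π := by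
  have hne : ¬ (0 : ℝ) ≡ vertexAngle α j - vertexAngle α i [PMOD 2 * π] := by
    rw [AddCommGroup.modEq_iff_toIcoMod_eq_left two_pi_pos]
    exact (arc_pos hα hspan hij).ne'
  rw [arc, arc, toIcoMod_zero_sub_comm _ (vertexAngle α i),
    ← (AddCommGroup.not_modEq_iff_toIcoMod_eq_toIocMod two_pi_pos).mp hne]
  ring

lemma injective_coe_vertexAngle : Injective fun i : ZMod n => (vertexAngle α i : Angle) := by
  intro i j h
  by_contra hij
  have : arc α i j = arc α i i := arc_eq_arc_of_coe_eq (by simp [h])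
  exact (arc_pos hα hspan hij).ne' (this.trans (arc_self i))

variable [Fact (1 < n)]

lemma arc_add_one_le {i m : ZMod n} (hm : m ≠ i) : arc α i (i + 1) ≤ arc α i m := by
  rw [arc_le_arc_iff hα hspan, add_sub_cancel_left, ZMod.val_one, Nat.one_le_iff_ne_zero,
    ne_eq, ZMod.val_eq_zero, sub_eq_zero]
  exact hm

lemma eq_add_one_of_forall_arc_le {i j : ZMod n} (hj : j ≠ i)
    (h : ∀ m, m ≠ i → arc α i j ≤ arc α i m) : j = i + 1 := by
  have hle := h (i + 1) (by simp)
  rw [arc_le_arc_iff hα hspan, add_sub_cancel_left, ZMod.val_one] at hle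
  have hpos : 0 < (j - i).val := ZMod.val_pos.mpr (sub_ne_zero.mpr hj)
  rw [← sub_eq_iff_eq_add']
  exact ZMod.val_injective n (by rw [ZMod.val_one]; omega)

lemma arc_le_arc_sub_one (k m : ZMod n) : arc α k m ≤ arc α k (k - 1) := by
  rw [arc_le_arc_iff hα hspan, sub_sub_cancel_left, ZMod.neg_val, if_neg one_ne_zero, ZMod.val_one]
  have := (m - k).val_lt
  omega

lemma map_add_one_of_arc_map_eq {p : ZMod n → ZMod n} (hp : Surjective p)
    (h : ∀ i j, arc α (p i) (p j) = arc α i j) (i : ZMod n) : p (i + 1) = p i + 1 := by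
  have hi : i ≠ i + 1 := by simp
  refine eq_add_one_of_forall_arc_le hα hspan (fun hpi => ?_) ?_
  · exact (arc_pos hα hspan hi).ne' (by rw [← h, hpi, arc_self])
  · rintro _ hm
    obtain ⟨m, rfl⟩ := hp ‹ZMod n›
    rw [h, h]
    exact arc_add_one_le hα hspan (fun hmi => hm (hmi ▸ rfl))

lemma map_add_one_of_arc_map_eq_swap {p : ZMod n → ZMod n} (hp : Surjective p)
    (h : ∀ i j, arc α (p i) (p j) = arc α j i) (i : ZMod n) : p (i + 1) = p i - 1 := by
  have hi : i ≠ i + 1 := by simp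
  rw [eq_sub_iff_add_eq, eq_comm]
  refine eq_add_one_of_forall_arc_le hα hspan (fun hpi => ?_) ?_
  · exact (arc_pos hα hspan hi).ne' (by rw [← h, hpi, arc_self])
  · rintro _ hm
    obtain ⟨m, rfl⟩ := hp ‹ZMod n›
    have hmi : m ≠ i + 1 := fun hmi => hm (hmi ▸ rfl)
    -- `i` is the predecessor of `i + 1`, reached by the longest counterclockwise arc from it
    have hmax := arc_le_arc_sub_one hα hspan (i + 1) m
    rw [add_sub_cancel_right] at hmax
    rw [h, h]
    linarith [arc_add_arc hα hspan hi, arc_add_arc hα hspan hmi]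

lemma map_eq_add_of_coe_vertexAngle {p : ZMod n → ZMod n} (hp : Surjective p) {φ : Angle}
    (h : ∀ i, (vertexAngle α (p i) : Angle) = φ + vertexAngle α i) (i : ZMod n) :
    p i = p 0 + i := by
  have harc : ∀ i j, arc α (p i) (p j) = arc α i j := fun i j =>
    arc_eq_arc_of_coe_eq (by rw [Angle.coe_sub, Angle.coe_sub, h, h]; abel)
  simpa using ZMod.eq_add_mul_of_map_add_one (map_add_one_of_arc_map_eq hα hspan hp harc) i

lemma map_eq_sub_of_coe_vertexAngle {p : ZMod n → ZMod n} (hp : Surjective p) {φ : Angle}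
    (h : ∀ i, (vertexAngle α (p i) : Angle) = φ - vertexAngle α i) (i : ZMod n) :
    p i = p 0 - i := by
  have harc : ∀ i j, arc α (p i) (p j) = arc α j i := fun i j =>
    arc_eq_arc_of_coe_eq (by rw [Angle.coe_sub, Angle.coe_sub, h, h]; abel)
  simpa [sub_eq_add_neg] using ZMod.eq_add_mul_of_map_add_one
    (fun i => (map_add_one_of_arc_map_eq_swap hα hspan hp harc i).trans (sub_eq_add_neg _ _)) i

end Arc

section Tuples

variable {P : Type*} [PseudoMetricSpace P] {n : ℕ} (v : ZMod n → P)

def cwDists (i : ZMod n) : List ℝ :=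
  List.ofFn fun k : Fin (n - 1) => dist (v i) (v (i + ((k : ℕ) : ZMod n) + 1))

def acwDists (i : ZMod n) : List ℝ :=
  List.ofFn fun k : Fin (n - 1) => dist (v i) (v (i - (((k : ℕ) : ZMod n) + 1)))

variable {v}

lemma cwDists_add {c : ZMod n} (hc : ∀ a b, dist (v (c + a)) (v (c + b)) = dist (v a) (v b))
    (i : ZMod n) : cwDists v (c + i) = cwDists v i := by
  simp only [cwDists, add_assoc, hc]

lemma acwDists_sub {c : ZMod n} (hc : ∀ a b, dist (v (c - a)) (v (c - b)) = dist (v a) (v b))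
    (i : ZMod n) : acwDists v (c - i) = cwDists v i := by
  simp only [acwDists, cwDists, sub_sub, add_assoc, hc]

end Tuples

section Circle

def unitVec (θ : Angle) : E := Complex.orthonormalBasisOneI.repr θ.toCircle

lemma unitVec_coe (x : ℝ) :
    unitVec x = (WithLp.equiv 2 (Fin 2 → ℝ)).symm ![Real.cos x, Real.sin x] := by
  ext i
  fin_cases i <;> simp [unitVec, Complex.exp_ofReal_mul_I_re, Complex.exp_ofReal_mul_I_im]

lemma norm_unitVec (θ : Angle) : ‖unitVec θ‖ = 1 := by
  rw [unitVec, LinearIsometryEquiv.norm_map, Circle.norm_coe]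

lemma unitVec_injective : Injective unitVec := by
  intro θ ψ h
  have h' : θ.toCircle = ψ.toCircle :=
    Circle.coe_injective (Complex.orthonormalBasisOneI.repr.injective h)
  simpa using congrArg (fun z : Circle => (Complex.arg z : Angle)) h'

lemma exists_map_unitVec (A : E ≃ₗᵢ[ℝ] E) : ∃ φ : Angle,
    (∀ θ, A (unitVec θ) = unitVec (φ + θ)) ∨ ∀ θ, A (unitVec θ) = unitVec (φ - θ) := by
  set e := Complex.orthonormalBasisOneI.repr
  obtain ⟨a, ha | ha⟩ := linear_isometry_complex (e.trans (A.trans e.symm))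
  · refine ⟨Complex.arg a, Or.inl fun θ => ?_⟩
    have h := congrArg (fun g => e (g θ.toCircle)) ha
    simp only [LinearIsometryEquiv.trans_apply, LinearIsometryEquiv.apply_symm_apply,
      rotation_apply] at h
    rw [unitVec, h, unitVec, Angle.toCircle_add, Angle.toCircle_coe, Circle.exp_arg, Circle.coe_mul]
  · refine ⟨Complex.arg a, Or.inr fun θ => ?_⟩
    have h := congrArg (fun g => e (g θ.toCircle)) ha
    simp only [LinearIsometryEquiv.trans_apply, LinearIsometryEquiv.apply_symm_apply,
      rotation_apply, Complex.conjLIE_apply] at h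
    rw [unitVec, h, unitVec, sub_eq_add_neg, Angle.toCircle_add, Angle.toCircle_neg,
      Angle.toCircle_coe, Circle.exp_arg, Circle.coe_mul, Circle.coe_inv_eq_conj]

variable {ι : Type*} {o : E} {ρ : ℝ} {θ : ι → Angle} {v : ι → E}

lemma injective_of_eq_add_smul_unitVec (hρ : ρ ≠ 0) (hθ : Injective θ)
    (hv : ∀ i, v i = o + ρ • unitVec (θ i)) : Injective v := fun i j h =>
  hθ (unitVec_injective (smul_right_injective E hρ
    (add_left_cancel ((hv i).symm.trans (h.trans (hv j))))))

lemma dist_eq_of_eq_add_smul_unitVec (hv : ∀ i, v i = o + ρ • unitVec (θ i)) (i : ι) :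
    dist (v i) o = |ρ| := by
  rw [hv, dist_eq_norm, add_sub_cancel_left, norm_smul, norm_unitVec, mul_one, Real.norm_eq_abs]

lemma exists_map_angle_eq_add_or_sub (hρ : ρ ≠ 0) (hv : ∀ i, v i = o + ρ • unitVec (θ i))
    {f : E ≃ᵃⁱ[ℝ] E} (hfo : f o = o) {p : ι → ι} (hp : ∀ i, v (p i) = f (v i)) :
    ∃ φ : Angle, (∀ i, θ (p i) = φ + θ i) ∨ ∀ i, θ (p i) = φ - θ i := by
  have hf : ∀ ψ, f (o + ρ • unitVec ψ) = o + ρ • f.linearIsometryEquiv (unitVec ψ) := fun ψ => by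
    rw [add_comm, ← vadd_eq_add, f.map_vadd, hfo, vadd_eq_add, add_comm, map_smul]
  have hcancel : ∀ ψ ψ', o + ρ • unitVec ψ = o + ρ • unitVec ψ' → ψ = ψ' := fun _ _ h =>
    unitVec_injective (smul_right_injective E hρ (add_left_cancel h))
  obtain ⟨φ, hrot | hrefl⟩ := exists_map_unitVec f.linearIsometryEquiv
  · exact ⟨φ, Or.inl fun i => hcancel _ _ (by rw [← hv, hp, hv, hf, hrot])⟩
  · exact ⟨φ, Or.inr fun i => hcancel _ _ (by rw [← hv, hp, hv, hf, hrefl])⟩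

end Circle

lemma apply_vertex_eq_self {n : ℕ} [NeZero n] [Fact (1 < n)] {o : E} {ρ : ℝ} (hρ : ρ ≠ 0)
    {α : Fin n → ℝ} (hα : StrictMono α) (hspan : ∀ a b, α b - α a < 2 * π) {v : ZMod n → E}
    (hv : ∀ i, v i = o + ρ • unitVec (vertexAngle α i))
    (h1 : ∀ i, cwDists v i ≠ acwDists v i) (h2 : ∀ i j, i ≠ j → cwDists v i ≠ cwDists v j)
    (h3 : ∀ i j, i ≠ j → cwDists v i ≠ acwDists v j) {f : E ≃ᵃⁱ[ℝ] E} (hfo : f o = o)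
    (hf : f '' range v ⊆ range v) (i : ZMod n) : f (v i) = v i := by
  obtain ⟨p, hp, hpv⟩ := exists_bijective_comp_eq
    (injective_of_eq_add_smul_unitVec hρ (injective_coe_vertexAngle hα hspan) hv) f.injective hf
  have hd : ∀ a b, dist (v (p a)) (v (p b)) = dist (v a) (v b) := fun a b => by
    rw [hpv, hpv, f.dist_map]
  obtain ⟨φ, hrot | hrefl⟩ := exists_map_angle_eq_add_or_sub hρ hv hfo hpv
  · have hpi := map_eq_add_of_coe_vertexAngle hα hspan hp.surjective hrot
    have hc : p 0 = 0 := by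
      by_contra hc
      refine h2 (p 0) 0 hc ?_
      have key := cwDists_add (fun a b => by rw [← hpi, ← hpi]; exact hd a b) 0
      rwa [add_zero] at key
    rw [← hpv, hpi, hc, zero_add]
  · have hpi := map_eq_sub_of_coe_vertexAngle hα hspan hp.surjective hrefl
    have key := acwDists_sub (fun a b => by rw [← hpi, ← hpi]; exact hd a b) 0
    rw [sub_zero] at key
    by_cases hc : p 0 = 0
    · exact absurd (hc ▸ key).symm (h1 0)
    · exact absurd key.symm (h3 0 (p 0) (Ne.symm hc))

end InscribedPolygon

end

open InscribedPolygon

/-- If, for an inscribed polygon, the clockwise/anticlockwise distance tuples satisfy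
`CW i ≠ ACW i` for all `i`, `CW i ≠ CW j` and `CW i ≠ ACW j` for all `i ≠ j`, then the
polygon is asymmetric: no reflection across a line maps its vertex set onto itself, and
the point reflection about the center does not map its vertex set onto itself. -/
theorem distance_tuple_conditions_imply_asymmetric
    (n : ℕ) (hn : 3 ≤ n) (o : E) (ρ : ℝ) (hρ : 0 < ρ)
    (α : Fin n → ℝ) (hα : StrictMono α)
    (hspan : α ⟨n - 1, by omega⟩ - α ⟨0, by omega⟩ < 2 * Real.pi)
    (v : ZMod n → E)
    (hv : ∀ k : Fin n, v ((k : ℕ) : ZMod n) =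
      o + ρ • (WithLp.equiv 2 (Fin 2 → ℝ)).symm ![Real.cos (α k), Real.sin (α k)])
    (CW ACW : ZMod n → List ℝ)
    (hCW : ∀ i : ZMod n, CW i =
      List.ofFn (fun k : Fin (n - 1) => dist (v i) (v (i + ((k : ℕ) : ZMod n) + 1))))
    (hACW : ∀ i : ZMod n, ACW i =
      List.ofFn (fun k : Fin (n - 1) => dist (v i) (v (i - (((k : ℕ) : ZMod n) + 1)))))
    (h1 : ∀ i : ZMod n, CW i ≠ ACW i)
    (h2 : ∀ i j : ZMod n, i ≠ j → CW i ≠ CW j)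
    (h3 : ∀ i j : ZMod n, i ≠ j → CW i ≠ ACW j) :
    (∀ (L : AffineSubspace ℝ E) [Nonempty L],
        Module.finrank ℝ L.direction = 1 →
        (EuclideanGeometry.reflection L) '' Set.range v ≠ Set.range v) ∧
      (Equiv.pointReflection o) '' Set.range v ≠ Set.range v := by
  have : NeZero n := ⟨by omega⟩
  have : Fact (1 < n) := ⟨by omega⟩
  obtain rfl : CW = cwDists v := funext hCW
  obtain rfl : ACW = acwDists v := funext hACW
  have hspan' : ∀ a b, α b - α a < 2 * π := fun a b => by
    have := hα.monotone (show b ≤ ⟨n - 1, by omega⟩ from Fin.mk_le_mk.mpr (by omega))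
    have := hα.monotone (show (⟨0, by omega⟩ : Fin n) ≤ a from Fin.mk_le_mk.mpr (by omega))
    linarith
  have hv' : ∀ i, v i = o + ρ • unitVec (vertexAngle α i) := fun i => by
    rw [unitVec_coe, vertexAngle, ← hv, ZMod.natCast_zmod_val]
  have hinj := injective_of_eq_add_smul_unitVec hρ.ne' (injective_coe_vertexAngle hα hspan') hv'
  have hsphere : range v ⊆ Metric.sphere o |ρ| := by
    rintro _ ⟨i, rfl⟩
    exact dist_eq_of_eq_add_smul_unitVec hv' i
  obtain ⟨a, b, c, hab, hac, hbc⟩ := (Fintype.two_lt_card_iff (α := ZMod n)).mp (by simp; omega)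
  have hfix : ∀ f : E ≃ᵃⁱ[ℝ] E, f '' range v = range v → ∀ i, f (v i) = v i := fun f hf =>
    apply_vertex_eq_self hρ.ne' hα hspan' hv' h1 h2 h3
      (f.isometry.map_center_eq_of_subset_image finrank_euclideanSpace_fin hsphere hf.superset
        (mem_range_self a) (mem_range_self b) (mem_range_self c) (hinj.ne hab) (hinj.ne hac)
        (hinj.ne hbc)) hf.subset
  refine ⟨fun L _ hL hLv => ?_, fun h => ?_⟩
  · refine EuclideanGeometry.Cospherical.not_subset_of_finrank_direction_eq_one ⟨o, |ρ|, hsphere⟩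
      (mem_range_self a) (mem_range_self b) (mem_range_self c) (hinj.ne hab) (hinj.ne hac)
      (hinj.ne hbc) hL ?_
    rintro _ ⟨i, rfl⟩
    exact (EuclideanGeometry.reflection_eq_self_iff _).mp (hfix _ hLv i)
  · have hvo := hfix (AffineIsometryEquiv.pointReflection ℝ o) h 0
    rw [AffineIsometryEquiv.pointReflection_fixed_iff] at hvo
    simpa [hvo, eq_comm, hρ.ne'] using hsphere (mem_range_self 0)
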